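/- arXiv:2505.19458 — 3 statements merged into one kernel-verified Lean document; each statement's English description precedes it below -/
import Mathlib

section
/- Let D, H be positive integers with 2H dividing D. For each h = 1, …, H let U_{1,h}, U_{2,h} ∈ ℝ^{D×(D/(2H))} satisfy the joint orthonormality condition U_{k,h}ᵀ U_{k',h'} = δ_{hh'} δ_{kk'} I_{D/(2H)} for all k, k' ∈ {1,2} and h, h' ∈ {1,…,H}, and set A_h = U_{1,h} U_{2,h}ᵀ. Then for any finite families of vectors v^h_1, …, v^h_m ∈ ℝ^D and scalars c^h_1, …, c^h_m ∈ ℝ (h = 1, …, H), the vectors Δ_h = Σ_{j=1}^m c^h_j (A_h + A_hᵀ) v^h_j are pairwise orthogonal: ⟨Δ_h, Δ_{h'}⟩ = 0 for all h ≠ h'. -/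
open scoped BigOperators RealInnerProductSpace Matrix

/-- with `A_h = U_{1,h} U_{2,h}ᵀ` built from jointly orthonormal factors, the vectors
`Δ_h = ∑_j c^h_j (A_h + A_hᵀ) v^h_j` are pairwise orthogonal for distinct heads. -/
theorem head_updates_pairwise_orthogonal
    {D H : ℕ} (hD : 0 < D) (hH : 0 < H) (hdvd : 2 * H ∣ D)
    (U1 U2 : Fin H → Matrix (Fin D) (Fin (D / (2 * H))) ℝ)
    (h11 : ∀ h h' : Fin H, (U1 h)ᵀ * U1 h' = if h = h' then 1 else 0)
    (h22 : ∀ h h' : Fin H, (U2 h)ᵀ * U2 h' = if h = h' then 1 else 0)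
    (h12 : ∀ h h' : Fin H, (U1 h)ᵀ * U2 h' = 0)
    (h21 : ∀ h h' : Fin H, (U2 h)ᵀ * U1 h' = 0)
    (A : Fin H → Matrix (Fin D) (Fin D) ℝ)
    (hA : ∀ h, A h = U1 h * (U2 h)ᵀ)
    (m : ℕ)
    (v : Fin H → Fin m → EuclideanSpace ℝ (Fin D))
    (c : Fin H → Fin m → ℝ)
    (Δ : Fin H → EuclideanSpace ℝ (Fin D))
    (hΔ : ∀ h, Δ h = ∑ j, c h j •
      ((WithLp.toLp 2 ((A h + (A h)ᵀ).mulVec (v h j))) : EuclideanSpace ℝ (Fin D)))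
    {h h' : Fin H} (hne : h ≠ h') :
    ⟪Δ h, Δ h'⟫ = 0 := by

  have aux : ∀ (P : Matrix (Fin D) (Fin (D / (2 * H))) ℝ)
      (Q : Matrix (Fin (D / (2 * H))) (Fin D) ℝ)
      (R : Matrix (Fin D) (Fin (D / (2 * H))) ℝ)
      (S : Matrix (Fin (D / (2 * H))) (Fin D) ℝ),
      Q * R = 0 → (P * Q) * (R * S) = 0 := by
    intro P Q R S hQR
    rw [Matrix.mul_assoc, ← Matrix.mul_assoc Q, hQR, Matrix.zero_mul, Matrix.mul_zero]
  have e11 : (U1 h)ᵀ * U1 h' = 0 := by simp [h11, hne]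
  have e22 : (U2 h)ᵀ * U2 h' = 0 := by simp [h22, hne]
  have tA : ∀ g, (A g)ᵀ = U2 g * (U1 g)ᵀ := by
    intro g; rw [hA, Matrix.transpose_mul, Matrix.transpose_transpose]
  have key : (A h + (A h)ᵀ)ᵀ * (A h' + (A h')ᵀ) = 0 := by
    rw [Matrix.transpose_add, Matrix.transpose_transpose, tA, tA, hA, hA,
      Matrix.add_mul, Matrix.mul_add, Matrix.mul_add,
      aux _ _ _ _ e22, aux _ _ _ _ e11, aux _ _ _ _ (h12 h h'), aux _ _ _ _ (h21 h h')]
    simp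
  have hin : ∀ x y : EuclideanSpace ℝ (Fin D),
      @inner ℝ (EuclideanSpace ℝ (Fin D)) _ (WithLp.toLp 2 ((A h + (A h)ᵀ).mulVec x))
        (WithLp.toLp 2 ((A h' + (A h')ᵀ).mulVec y)) = 0 := by
    intro x y
    have hd : ((A h + (A h)ᵀ).mulVec x) ⬝ᵥ ((A h' + (A h')ᵀ).mulVec y) = 0 := by
      rw [Matrix.dotProduct_mulVec, ← Matrix.vecMul_transpose, Matrix.vecMul_vecMul, key,
        Matrix.vecMul_zero, zero_dotProduct]
    rw [show @inner ℝ (EuclideanSpace ℝ (Fin D)) _ (WithLp.toLp 2 ((A h + (A h)ᵀ).mulVec x))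
        (WithLp.toLp 2 ((A h' + (A h')ᵀ).mulVec y))
       = ((A h + (A h)ᵀ).mulVec x) ⬝ᵥ ((A h' + (A h')ᵀ).mulVec y) from by
      simp [PiLp.inner_apply, dotProduct, mul_comm], hd]
  rw [hΔ, hΔ, inner_sum]
  apply Finset.sum_eq_zero
  intro j _
  rw [sum_inner]
  apply Finset.sum_eq_zero
  intro i _
  rw [real_inner_smul_left, real_inner_smul_right, hin]
  ring
end

section
/- Let S, D, D_H, H be positive integers, β ∈ ℝ, η > 0, R > 0, γ ∈ ℝ^D with all entries nonzero, C ∈ ℝ^{S×D}, and weight matrices W^Q_h, W^K_h, W^V_h ∈ ℝ^{D×D_H} (h = 1,…,H) and W^O ∈ ℝ^{D×D}. Define F(X) = RMSNorm(X + η(C + MSA(X))) on matrices X ∈ ℝ^{S×D}. Fix X such that every row of Y = X + η(C + MSA(X)) satisfies ‖Y_{[i,:]}‖ ≥ R. Then F is differentiable at X and the operator norm of its Fréchet derivative satisfies ‖DF(X)‖₂ ≤ (max_j |γ_j| / R) · (1 + η ‖D MSA(X)‖₂), where D MSA(X) is the Fréchet derivative of MSA at X. -/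
open scoped BigOperators Matrix
attribute [local instance] Matrix.frobeniusNormedAddCommGroup Matrix.frobeniusNormedSpace

/-- Euclidean norm of a row vector. -/
noncomputable def rowNorm {D : ℕ} (v : Fin D → ℝ) : ℝ :=
  Real.sqrt (∑ j, v j ^ 2)

/-- Row-wise RMS normalization with scaling parameter `γ`:
`RMSNorm(Y)_{[i,:]} = diag(γ) Y_{[i,:]} / ‖Y_{[i,:]}‖`. -/
noncomputable def RMSNorm {S D : ℕ} (γ : Fin D → ℝ)
    (Y : Matrix (Fin S) (Fin D) ℝ) : Matrix (Fin S) (Fin D) ℝ :=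
  Matrix.of fun i j => γ j * Y i j / rowNorm (Y i)

/-- Row-wise softmax of a square matrix. -/
noncomputable def rowSoftmax {S : ℕ} (M : Matrix (Fin S) (Fin S) ℝ) :
    Matrix (Fin S) (Fin S) ℝ :=
  Matrix.of fun i j => Real.exp (M i j) / ∑ j', Real.exp (M i j')

/-- A single self-attention head `softmax(β X W^Q W^{K⊤} Xᵀ) X W^V`. -/
noncomputable def SAhead {S D DH : ℕ} (β : ℝ) (WQ WK WV : Matrix (Fin D) (Fin DH) ℝ)
    (X : Matrix (Fin S) (Fin D) ℝ) : Matrix (Fin S) (Fin DH) ℝ :=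
  rowSoftmax (β • (X * WQ * WKᵀ * Xᵀ)) * X * WV

/-- Multi-head self-attention: the heads are concatenated along columns (via the bijection
`Fin H × Fin DH ≃ Fin (H * DH) = Fin D`) and multiplied by the output matrix `W^O`. -/
noncomputable def MSA {S D DH H : ℕ} (hD : H * DH = D) (β : ℝ)
    (WQ WK WV : Fin H → Matrix (Fin D) (Fin DH) ℝ) (WO : Matrix (Fin D) (Fin D) ℝ)
    (X : Matrix (Fin S) (Fin D) ℝ) : Matrix (Fin S) (Fin D) ℝ :=
  (Matrix.of fun (i : Fin S) (d : Fin D) =>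
    SAhead β (WQ (finProdFinEquiv.symm (finCongr hD.symm d)).1)
      (WK (finProdFinEquiv.symm (finCongr hD.symm d)).1)
      (WV (finProdFinEquiv.symm (finCongr hD.symm d)).1) X i
      (finProdFinEquiv.symm (finCongr hD.symm d)).2) * WO

section MatTopSec

noncomputable abbrev matTop {S D : ℕ} : TopologicalSpace (Matrix (Fin S) (Fin D) ℝ) :=
  (Matrix.frobeniusNormedAddCommGroup (m := Fin S) (n := Fin D) (α := ℝ)).toPseudoMetricSpace.toUniformSpace.toTopologicalSpace

attribute [local instance high] matTop

noncomputable def matCLE (S D : ℕ) : Matrix (Fin S) (Fin D) ℝ ≃L[ℝ] (Fin S → Fin D → ℝ) :=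
  (Matrix.ofLinearEquiv ℝ).symm.toContinuousLinearEquiv

noncomputable def entryCLM (A B : ℕ) (i : Fin A) (j : Fin B) :
    Matrix (Fin A) (Fin B) ℝ →L[ℝ] ℝ :=
  (ContinuousLinearMap.proj j).comp
    ((ContinuousLinearMap.proj i : (Fin A → Fin B → ℝ) →L[ℝ] (Fin B → ℝ)).comp
      (matCLE A B).toContinuousLinearMap)

@[simp] lemma entryCLM_apply {A B : ℕ} (i : Fin A) (j : Fin B)
    (M : Matrix (Fin A) (Fin B) ℝ) : entryCLM A B i j M = M i j := rfl

lemma diffAt_matrix {S D A B : ℕ} {f : Matrix (Fin S) (Fin D) ℝ → Matrix (Fin A) (Fin B) ℝ}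
    {X : Matrix (Fin S) (Fin D) ℝ}
    (h : ∀ i j, DifferentiableAt ℝ (fun X => f X i j) X) :
    DifferentiableAt ℝ f X := by
  have hf : f = (matCLE A B).symm ∘ (fun X (i : Fin A) (j : Fin B) => f X i j) := by
    ext Y i j; rfl
  rw [hf]
  exact ((matCLE A B).symm.differentiableAt).comp X
    (differentiableAt_pi.2 fun i => differentiableAt_pi.2 fun j => h i j)

lemma hasFDerivAt_matrix {S D A B : ℕ} {f : Matrix (Fin S) (Fin D) ℝ → Matrix (Fin A) (Fin B) ℝ}
    {L : Matrix (Fin S) (Fin D) ℝ →L[ℝ] Matrix (Fin A) (Fin B) ℝ}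
    {X : Matrix (Fin S) (Fin D) ℝ}
    (h : ∀ i j, HasFDerivAt (fun X => f X i j) ((entryCLM A B i j).comp L) X) :
    HasFDerivAt f L X := by
  apply (matCLE A B).comp_hasFDerivAt_iff.mp
  apply hasFDerivAt_pi'.mpr
  intro i
  apply hasFDerivAt_pi'.mpr
  intro j
  exact h i j

lemma dEntry {S D : ℕ} (i : Fin S) (j : Fin D) :
    Differentiable ℝ (fun X : Matrix (Fin S) (Fin D) ℝ => X i j) := by
  have h : (fun X : Matrix (Fin S) (Fin D) ℝ => X i j)
      = (fun v : Fin S → Fin D → ℝ => v i j) ∘ (matCLE S D) := rfl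
  rw [h]
  exact (((ContinuousLinearMap.proj j).comp
    (ContinuousLinearMap.proj i : (Fin S → Fin D → ℝ) →L[ℝ] (Fin D → ℝ))).differentiable).comp
    (matCLE S D).differentiable

lemma softmax_entry_diff {S D DH : ℕ} (hS : 0 < S) (β : ℝ)
    (WQ WK : Matrix (Fin D) (Fin DH) ℝ) (i s : Fin S) (X : Matrix (Fin S) (Fin D) ℝ) :
    DifferentiableAt ℝ
      (fun X : Matrix (Fin S) (Fin D) ℝ =>
        rowSoftmax (β • (X * WQ * WKᵀ * Xᵀ)) i s) X := by
  have hN : ∀ s' : Fin S, DifferentiableAt ℝ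
      (fun X : Matrix (Fin S) (Fin D) ℝ => (β • (X * WQ * WKᵀ * Xᵀ)) i s') X := by
    intro s'
    simp only [Matrix.smul_apply, Matrix.mul_apply, Matrix.transpose_apply, smul_eq_mul]
    exact (DifferentiableAt.fun_sum fun a _ =>
      (DifferentiableAt.fun_sum fun b _ =>
        ((DifferentiableAt.fun_sum fun c _ => ((dEntry i c).differentiableAt).mul_const
            (WQ c b)).mul_const (WK a b))).mul ((dEntry s' a).differentiableAt)).const_mul β
  simp only [rowSoftmax, Matrix.of_apply]
  have hpos : (0:ℝ) < ∑ s', Real.exp ((β • (X * WQ * WKᵀ * Xᵀ)) i s') :=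
    Finset.sum_pos (fun _ _ => Real.exp_pos _)
      (have : Nonempty (Fin S) := ⟨⟨0, hS⟩⟩; Finset.univ_nonempty)
  simp only [div_eq_mul_inv]
  exact ((hN s).exp).mul ((DifferentiableAt.fun_sum fun s' _ => (hN s').exp).inv hpos.ne')

lemma msa_diff {S D DH H : ℕ} (hS : 0 < S) (hD : H * DH = D) (β : ℝ)
    (WQ WK WV : Fin H → Matrix (Fin D) (Fin DH) ℝ) (WO : Matrix (Fin D) (Fin D) ℝ) :
    Differentiable ℝ (MSA (S := S) hD β WQ WK WV WO) := by
  intro X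
  apply diffAt_matrix
  intro i d
  simp only [MSA, Matrix.mul_apply, Matrix.of_apply]
  apply DifferentiableAt.fun_sum; intro e _
  apply DifferentiableAt.mul_const
  simp only [SAhead, Matrix.mul_apply]
  apply DifferentiableAt.fun_sum; intro l _
  apply DifferentiableAt.mul_const
  apply DifferentiableAt.fun_sum; intro s _
  exact (softmax_entry_diff hS β _ _ i s X).mul ((dEntry s l).differentiableAt)

/-- The derivative of the row-wise RMS normalization. -/
noncomputable def rmsDeriv {S D : ℕ} (γ : Fin D → ℝ) (Y : Matrix (Fin S) (Fin D) ℝ) :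
    Matrix (Fin S) (Fin D) ℝ →L[ℝ] Matrix (Fin S) (Fin D) ℝ :=
  LinearMap.toContinuousLinearMap
    { toFun := fun E => Matrix.of fun i j =>
        γ j * (E i j / rowNorm (Y i) - Y i j * (∑ k, Y i k * E i k) / rowNorm (Y i) ^ 3)
      map_add' := by
        intro E E'
        ext i j
        show γ j * ((E i j + E' i j) / rowNorm (Y i)
            - Y i j * (∑ k, Y i k * (E i k + E' i k)) / rowNorm (Y i) ^ 3) = _ + _
        show _ = γ j * (E i j / rowNorm (Y i)
              - Y i j * (∑ k, Y i k * E i k) / rowNorm (Y i) ^ 3)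
            + γ j * (E' i j / rowNorm (Y i)
              - Y i j * (∑ k, Y i k * E' i k) / rowNorm (Y i) ^ 3)
        simp only [mul_add, Finset.sum_add_distrib]
        ring
      map_smul' := by
        intro c E
        ext i j
        show γ j * ((c * E i j) / rowNorm (Y i)
            - Y i j * (∑ k, Y i k * (c * E i k)) / rowNorm (Y i) ^ 3) = _
        show _ = c * (γ j * (E i j / rowNorm (Y i)
            - Y i j * (∑ k, Y i k * E i k) / rowNorm (Y i) ^ 3))
        rw [show (∑ k, Y i k * (c * E i k)) = c * ∑ k, Y i k * E i k by
          rw [Finset.mul_sum]; exact Finset.sum_congr rfl fun k _ => by ring]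
        ring }

@[simp] lemma rmsDeriv_apply {S D : ℕ} (γ : Fin D → ℝ) (Y E : Matrix (Fin S) (Fin D) ℝ)
    (i : Fin S) (j : Fin D) :
    rmsDeriv γ Y E i j
      = γ j * (E i j / rowNorm (Y i) - Y i j * (∑ k, Y i k * E i k) / rowNorm (Y i) ^ 3) := by
  simp [rmsDeriv]

lemma rms_hasFDerivAt {S D : ℕ} (γ : Fin D → ℝ) (Y : Matrix (Fin S) (Fin D) ℝ)
    (hY : ∀ i, 0 < rowNorm (Y i)) :
    HasFDerivAt (RMSNorm γ) (rmsDeriv γ Y) Y := by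
  apply hasFDerivAt_matrix
  intro i j
  have hek : ∀ k : Fin D, HasFDerivAt (fun Y : Matrix (Fin S) (Fin D) ℝ => Y i k)
      (entryCLM S D i k) Y := fun k => (entryCLM S D i k).hasFDerivAt
  have hsq : ∀ k : Fin D, HasFDerivAt (fun Y : Matrix (Fin S) (Fin D) ℝ => Y i k ^ 2)
      ((2 * Y i k) • entryCLM S D i k) Y := by
    intro k
    have h := (hek k).mul (hek k)
    have h2 : (fun Y : Matrix (Fin S) (Fin D) ℝ => Y i k ^ 2)
        = fun Y => Y i k * Y i k := by funext Y; ring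
    rw [h2]
    refine h.congr_fderiv (Eq.symm ?_)
    ext E
    simp only [ContinuousLinearMap.coe_smul', Pi.smul_apply, ContinuousLinearMap.add_apply,
      entryCLM_apply, smul_eq_mul]
    ring
  have hsum : HasFDerivAt (fun Y : Matrix (Fin S) (Fin D) ℝ => ∑ k, Y i k ^ 2)
      (∑ k, (2 * Y i k) • entryCLM S D i k) Y :=
    HasFDerivAt.fun_sum fun k _ => hsq k
  have hq : (0:ℝ) < ∑ k, Y i k ^ 2 := by
    have h := hY i
    rw [rowNorm] at h
    exact Real.sqrt_pos.mp h
  have hr : HasFDerivAt (fun Y : Matrix (Fin S) (Fin D) ℝ => rowNorm (Y i))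
      ((1 / (2 * Real.sqrt (∑ k, Y i k ^ 2))) • ∑ k, (2 * Y i k) • entryCLM S D i k) Y := by
    simp only [rowNorm]
    exact hsum.sqrt hq.ne'
  have hrY : rowNorm (Y i) = Real.sqrt (∑ k, Y i k ^ 2) := rfl
  have hrne : rowNorm (Y i) ≠ 0 := (hY i).ne'
  have hinv : HasFDerivAt (fun Y : Matrix (Fin S) (Fin D) ℝ => (rowNorm (Y i))⁻¹)
      ((-((rowNorm (Y i)) ^ 2)⁻¹) •
        ((1 / (2 * Real.sqrt (∑ k, Y i k ^ 2))) • ∑ k, (2 * Y i k) • entryCLM S D i k)) Y :=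
    (hasDerivAt_inv hrne).comp_hasFDerivAt Y hr
  have hnum : HasFDerivAt (fun Y : Matrix (Fin S) (Fin D) ℝ => γ j * Y i j)
      (γ j • entryCLM S D i j) Y := (hek j).const_mul (γ j)
  have hmain := hnum.mul hinv
  have : (fun Y : Matrix (Fin S) (Fin D) ℝ => RMSNorm γ Y i j)
      = fun Y : Matrix (Fin S) (Fin D) ℝ => (γ j * Y i j) * (rowNorm (Y i))⁻¹ := by
    funext Y
    simp [RMSNorm, div_eq_mul_inv]
  rw [this]
  refine hmain.congr_fderiv (Eq.symm ?_)
  ext E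
  simp only [ContinuousLinearMap.coe_comp', Function.comp_apply, rmsDeriv_apply,
    entryCLM_apply, ContinuousLinearMap.add_apply, ContinuousLinearMap.coe_smul',
    Pi.smul_apply, ContinuousLinearMap.coe_sum', Finset.sum_apply, smul_eq_mul,
    pow_one]
  rw [← hrY]
  have h2 : rowNorm (Y i) ^ 2 = ∑ k, Y i k ^ 2 := by
    rw [hrY]; exact Real.sq_sqrt hq.le
  field_simp
  rw [show (∑ k, 2 * Y i k * E i k) = 2 * ∑ k, Y i k * E i k by
    rw [Finset.mul_sum]; exact Finset.sum_congr rfl fun k _ => by ring]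
  ring_nf

lemma frob_norm_eq {A B : ℕ} (M : Matrix (Fin A) (Fin B) ℝ) :
    ‖M‖ = Real.sqrt (∑ i, ∑ j, M i j ^ 2) := by
  rw [Matrix.frobenius_norm_def, Real.sqrt_eq_rpow]
  congr 1
  refine Finset.sum_congr rfl fun i _ => Finset.sum_congr rfl fun j _ => ?_
  rw [show ((2:ℝ)) = ((2:ℕ):ℝ) by norm_num, Real.rpow_natCast, Real.norm_eq_abs, sq_abs]

lemma rmsDeriv_norm_le {S D : ℕ} (hD0 : 0 < D) (R : ℝ) (hR : 0 < R) (γ : Fin D → ℝ)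
    (Y : Matrix (Fin S) (Fin D) ℝ) (hrow : ∀ i, R ≤ rowNorm (Y i)) :
    ‖rmsDeriv γ Y‖ ≤ (⨆ j, |γ j|) / R := by
  have hne : Nonempty (Fin D) := ⟨⟨0, hD0⟩⟩
  set g := ⨆ j, |γ j| with hg
  have hgb : ∀ j, |γ j| ≤ g := fun j => le_ciSup (f := fun j => |γ j|) (Set.Finite.bddAbove (Set.finite_range _)) j
  have hg0 : 0 ≤ g := (abs_nonneg _).trans (hgb (Classical.arbitrary _))
  apply ContinuousLinearMap.opNorm_le_bound _ (by positivity)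
  intro E
  have hrowb : ∀ i, ∑ j, (rmsDeriv γ Y E i j)^2 ≤ (g/R)^2 * ∑ j, E i j ^ 2 := by
    intro i
    have hr0 : 0 < rowNorm (Y i) := hR.trans_le (hrow i)
    set r := rowNorm (Y i) with hrdef
    have hq : r ^ 2 = ∑ k, Y i k ^ 2 :=
      Real.sq_sqrt (Finset.sum_nonneg fun k _ => sq_nonneg _)
    set s2 := ∑ k, Y i k * E i k with hs2
    have step1 : ∑ j, (rmsDeriv γ Y E i j)^2
        ≤ g^2 * ∑ j, (E i j / r - Y i j * s2 / r^3)^2 := by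
      rw [Finset.mul_sum]
      apply Finset.sum_le_sum
      intro j _
      rw [rmsDeriv_apply, mul_pow]
      apply mul_le_mul_of_nonneg_right _ (sq_nonneg _)
      calc γ j ^2 = |γ j|^2 := (sq_abs _).symm
        _ ≤ g^2 := pow_le_pow_left₀ (abs_nonneg _) (hgb j) 2
    have expand : ∑ j, (E i j / r - Y i j * s2 / r^3)^2
        = (∑ j, E i j ^2)/r^2 - s2^2/r^4 := by
      have h1 : ∀ j, (E i j / r - Y i j * s2 / r^3)^2
          = E i j ^2 * (r^2)⁻¹ - (Y i j * E i j) * (2*s2*(r^4)⁻¹)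
            + Y i j ^2 * (s2^2*(r^6)⁻¹) := by
        intro j; field_simp; ring
      rw [Finset.sum_congr rfl fun j _ => h1 j]
      rw [Finset.sum_add_distrib, Finset.sum_sub_distrib, ← Finset.sum_mul, ← Finset.sum_mul,
        ← Finset.sum_mul, ← hs2, ← hq]
      field_simp
      ring
    calc ∑ j, (rmsDeriv γ Y E i j)^2
        ≤ g^2 * ((∑ j, E i j^2)/r^2 - s2^2/r^4) := by rw [← expand]; exact step1
      _ ≤ g^2 * ((∑ j, E i j^2)/R^2) := by
          have h4 : (∑ j, E i j^2)/r^2 - s2^2/r^4 ≤ (∑ j, E i j^2)/r^2 :=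
            sub_le_self _ (by positivity)
          have h5 : (∑ j, E i j^2)/r^2 ≤ (∑ j, E i j^2)/R^2 :=
            div_le_div_of_nonneg_left (Finset.sum_nonneg fun j _ => sq_nonneg _)
              (by positivity) (pow_le_pow_left₀ hR.le (hrow i) 2)
          exact mul_le_mul_of_nonneg_left (h4.trans h5) (by positivity)
      _ = (g/R)^2 * ∑ j, E i j^2 := by rw [div_pow]; ring
  rw [frob_norm_eq, frob_norm_eq]
  calc Real.sqrt (∑ i, ∑ j, (rmsDeriv γ Y E i j)^2)
      ≤ Real.sqrt (∑ i, (g/R)^2 * ∑ j, E i j^2) :=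
        Real.sqrt_le_sqrt (Finset.sum_le_sum fun i _ => hrowb i)
    _ = (g/R) * Real.sqrt (∑ i, ∑ j, E i j ^2) := by
        rw [← Finset.mul_sum, Real.sqrt_mul (sq_nonneg _), Real.sqrt_sq (by positivity)]

end MatTopSec

/-- for `F(X) = RMSNorm(X + η(C + MSA(X)))`, if every row of
`Y = X + η(C + MSA(X))` has Euclidean norm at least `R > 0`, then `F` is differentiable at `X` and
`‖DF(X)‖ ≤ (max_j |γ_j| / R) (1 + η ‖D MSA(X)‖)`, in the operator norm induced by the
Frobenius norm. -/
theorem rmsnorm_itrsa_jacobian_bound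
    {S D DH H : ℕ} (hS : 0 < S) (hD0 : 0 < D) (hDH : 0 < DH) (hH : 0 < H)
    (hD : H * DH = D) (β : ℝ) (η : ℝ) (hη : 0 < η) (R : ℝ) (hR : 0 < R)
    (γ : Fin D → ℝ) (hγ : ∀ j, γ j ≠ 0)
    (C : Matrix (Fin S) (Fin D) ℝ)
    (WQ WK WV : Fin H → Matrix (Fin D) (Fin DH) ℝ) (WO : Matrix (Fin D) (Fin D) ℝ)
    (F : Matrix (Fin S) (Fin D) ℝ → Matrix (Fin S) (Fin D) ℝ)
    (hF : F = fun X => RMSNorm γ (X + η • (C + MSA hD β WQ WK WV WO X)))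
    (X : Matrix (Fin S) (Fin D) ℝ)
    (hrow : ∀ i, R ≤ rowNorm ((X + η • (C + MSA hD β WQ WK WV WO X)) i)) :
    DifferentiableAt ℝ F X ∧
      @Norm.norm _ ContinuousLinearMap.hasOpNorm (fderiv ℝ F X) ≤ ((⨆ j, |γ j|) / R) *
        (1 + η * @Norm.norm _ ContinuousLinearMap.hasOpNorm (fderiv ℝ (MSA hD β WQ WK WV WO) X)) := by
  letI : TopologicalSpace (Matrix (Fin S) (Fin D) ℝ) := matTop
  have hMSAd : DifferentiableAt ℝ (MSA hD β WQ WK WV WO) X :=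
    msa_diff hS hD β WQ WK WV WO X
  set M' := fderiv ℝ (MSA hD β WQ WK WV WO) X with hM'
  set Y := X + η • (C + MSA hD β WQ WK WV WO X) with hYdef
  have hYpos : ∀ i, 0 < rowNorm (Y i) := fun i => hR.trans_le (hrow i)
  have hG : HasFDerivAt (fun X' => X' + η • (C + MSA hD β WQ WK WV WO X'))
      (ContinuousLinearMap.id ℝ _ + η • M') X := by
    have h1 : HasFDerivAt (fun X' => C + MSA hD β WQ WK WV WO X') M' X :=
      hMSAd.hasFDerivAt.const_add C
    exact (hasFDerivAt_id X).add (h1.const_smul η)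
  have hRd : HasFDerivAt (RMSNorm γ) (rmsDeriv γ Y) Y := rms_hasFDerivAt γ Y hYpos
  have hFd : HasFDerivAt F ((rmsDeriv γ Y).comp (ContinuousLinearMap.id ℝ _ + η • M')) X := by
    rw [hF]
    exact HasFDerivAt.comp (g := RMSNorm γ) X hRd hG
  refine ⟨hFd.differentiableAt, ?_⟩
  rw [hFd.fderiv]
  have h2 : ‖rmsDeriv γ Y‖ ≤ (⨆ j, |γ j|) / R := rmsDeriv_norm_le hD0 R hR γ Y hrow
  have h3 : ‖ContinuousLinearMap.id ℝ (Matrix (Fin S) (Fin D) ℝ) + η • M'‖ ≤ 1 + η * ‖M'‖ := by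
    refine (norm_add_le _ _).trans ?_
    have hid : ‖ContinuousLinearMap.id ℝ (Matrix (Fin S) (Fin D) ℝ)‖ ≤ 1 :=
      ContinuousLinearMap.norm_id_le
    have hsm : ‖η • M'‖ = η * ‖M'‖ := by rw [norm_smul, Real.norm_eq_abs, abs_of_pos hη]
    rw [hsm]
    exact add_le_add_left hid _
  calc ‖(rmsDeriv γ Y).comp (ContinuousLinearMap.id ℝ _ + η • M')‖
      ≤ ‖rmsDeriv γ Y‖ * ‖ContinuousLinearMap.id ℝ (Matrix (Fin S) (Fin D) ℝ) + η • M'‖ :=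
        ContinuousLinearMap.opNorm_comp_le _ _
    _ ≤ ((⨆ j, |γ j|) / R) * (1 + η * ‖M'‖) := by
        have hg0 : 0 ≤ (⨆ j, |γ j|) / R := le_trans (norm_nonneg _) h2
        exact mul_le_mul h2 h3 (norm_nonneg _) hg0
end

section
/- Let Ω ∈ ℝ^{D×D} be antisymmetric (Ωᵀ = −Ω) with ΩᵀΩ = ω² I_D for some ω ≥ 0, let η ∈ ℝ, and let x ∈ ℝ^D with ‖x‖ = 1. Set y = (I_D + η Ω) x (so ‖y‖² = 1 + η² ω² > 0). Then the Jacobian of the normalized discrete update, J = (I_D − y yᵀ / ‖y‖²) (I_D + η Ω) / ‖y‖, satisfies ‖J‖₂ ≤ 1; in particular every complex eigenvalue λ of J satisfies |λ| ≤ 1. -/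
open scoped Matrix

private lemma euc_norm_sq' {D : ℕ} (z : EuclideanSpace ℝ (Fin D)) :
    ‖z‖ ^ 2 = dotProduct (z : Fin D → ℝ) z := by
  rw [← real_inner_self_eq_norm_sq, EuclideanSpace.inner_eq_star_dotProduct]
  rfl

private lemma vecMulVec_mulVec' {D : ℕ} (y w : Fin D → ℝ) :
    (Matrix.vecMulVec y y) *ᵥ w = (dotProduct y w) • y := by
  funext i
  simp [Matrix.vecMulVec, Matrix.mulVec, dotProduct, Finset.mul_sum, mul_comm,
    mul_left_comm]

/-- for antisymmetric `Ω` with `ΩᵀΩ = ω² I`, `‖x‖ = 1`, and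
`y = (I + ηΩ)x`, the Jacobian of the normalized discrete update
`J = (I − y yᵀ/‖y‖²)(I + ηΩ)/‖y‖` satisfies `‖J‖₂ ≤ 1`; in particular every complex eigenvalue
`λ` of `J` satisfies `|λ| ≤ 1`. -/
theorem normalized_oscillatory_jacobian_bound
    {D : ℕ} (hD : 0 < D) (Ω : Matrix (Fin D) (Fin D) ℝ) (hΩ : Ωᵀ = -Ω)
    (ω : ℝ) (hω : 0 ≤ ω)
    (hΩ2 : Ωᵀ * Ω = ω ^ 2 • (1 : Matrix (Fin D) (Fin D) ℝ))
    (η : ℝ) (x : EuclideanSpace ℝ (Fin D)) (hx : ‖x‖ = 1)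
    (y : EuclideanSpace ℝ (Fin D))
    (hy : y = (WithLp.toLp 2 (((1 : Matrix (Fin D) (Fin D) ℝ) + η • Ω).mulVec x) : EuclideanSpace ℝ (Fin D)))
    (J : Matrix (Fin D) (Fin D) ℝ)
    (hJ : J = ‖y‖⁻¹ •
      (((1 : Matrix (Fin D) (Fin D) ℝ) - (‖y‖ ^ 2)⁻¹ • Matrix.vecMulVec y y) *
        ((1 : Matrix (Fin D) (Fin D) ℝ) + η • Ω))) :
    ‖(Matrix.toEuclideanCLM (𝕜 := ℝ) J :
        EuclideanSpace ℝ (Fin D) →L[ℝ] EuclideanSpace ℝ (Fin D))‖ ≤ 1 ∧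
      ∀ (lam : ℂ) (v : Fin D → ℂ), v ≠ 0 →
        (J.map Complex.ofReal).mulVec v = lam • v → ‖lam‖ ≤ 1 := by
  set A : Matrix (Fin D) (Fin D) ℝ := (1 : Matrix (Fin D) (Fin D) ℝ) + η • Ω with hA
  set c : ℝ := 1 + η ^ 2 * ω ^ 2 with hc
  have hcpos : 0 < c := by positivity
  have hΩΩ : Ω * Ω = -(ω ^ 2 • (1 : Matrix (Fin D) (Fin D) ℝ)) := by
    rw [hΩ] at hΩ2
    rw [← neg_eq_iff_eq_neg, ← neg_mul, hΩ2]
  have hATA : Aᵀ * A = c • (1 : Matrix (Fin D) (Fin D) ℝ) := by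
    have hAT : Aᵀ = (1 : Matrix (Fin D) (Fin D) ℝ) - η • Ω := by
      simp [hA, Matrix.transpose_add, Matrix.transpose_smul, hΩ, sub_eq_add_neg]
    rw [hAT, hA]
    simp only [sub_mul, mul_add, Matrix.smul_mul, Matrix.mul_smul, hΩΩ, smul_smul, smul_neg,
      Matrix.mul_one, Matrix.one_mul, hc]
    module
  -- dot product identity for A
  have hAdot : ∀ z : Fin D → ℝ,
      dotProduct (A *ᵥ z) (A *ᵥ z) = c * dotProduct z z := by
    intro z
    rw [Matrix.dotProduct_mulVec, ← Matrix.mulVec_transpose, Matrix.mulVec_mulVec, hATA,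
      Matrix.smul_mulVec, Matrix.one_mulVec, dotProduct_comm,
      dotProduct_smul, smul_eq_mul]
  have hynorm : ‖y‖ ^ 2 = c := by
    rw [euc_norm_sq', hy, WithLp.ofLp_toLp]
    have := hAdot (x : Fin D → ℝ)
    rw [this]
    have : dotProduct (x : Fin D → ℝ) x = 1 := by
      rw [← euc_norm_sq', hx]; norm_num
    rw [this, mul_one]
  have hypos : 0 < ‖y‖ := by
    have h : (0:ℝ) < ‖y‖ ^ 2 := hynorm ▸ hcpos
    nlinarith [norm_nonneg y]
  set yv : Fin D → ℝ := fun i => y i with hyv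
  have hyd : dotProduct yv yv = c := by
    rw [show dotProduct yv yv = dotProduct (y : Fin D → ℝ) y from rfl,
      ← euc_norm_sq', hynorm]
  -- projection bound
  set P : Matrix (Fin D) (Fin D) ℝ :=
    (1 : Matrix (Fin D) (Fin D) ℝ) - (‖y‖ ^ 2)⁻¹ • Matrix.vecMulVec y y with hP
  have hproj : ∀ w : Fin D → ℝ,
      dotProduct (P *ᵥ w) (P *ᵥ w) ≤ dotProduct w w := by
    intro w
    have hPw : P *ᵥ w = w - (c⁻¹ * dotProduct yv w) • yv := by
      rw [hP, Matrix.sub_mulVec, Matrix.one_mulVec, Matrix.smul_mulVec, hynorm]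
      rw [show Matrix.vecMulVec y y *ᵥ w = Matrix.vecMulVec yv yv *ᵥ w from rfl,
        vecMulVec_mulVec', smul_smul]
    rw [hPw]
    set t : ℝ := c⁻¹ * dotProduct yv w with ht
    have hexp : dotProduct (w - t • yv) (w - t • yv) =
        dotProduct w w - 2 * t * dotProduct yv w +
          t ^ 2 * c := by
      rw [sub_dotProduct, dotProduct_sub, dotProduct_sub,
        smul_dotProduct, dotProduct_smul, smul_dotProduct,
        dotProduct_smul, hyd, dotProduct_comm w yv]
      simp only [smul_eq_mul]
      ring
    rw [hexp]
    have h1 : t * c = dotProduct yv w := by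
      rw [ht]
      field_simp
    nlinarith [sq_nonneg t, hcpos, sq_nonneg (dotProduct yv w)]
  -- main bound
  have hJbound : ∀ z : Fin D → ℝ,
      dotProduct (J *ᵥ z) (J *ᵥ z) ≤ dotProduct z z := by
    intro z
    have hJz : J *ᵥ z = ‖y‖⁻¹ • (P *ᵥ (A *ᵥ z)) := by
      rw [hJ, Matrix.smul_mulVec, ← Matrix.mulVec_mulVec]
    rw [hJz, smul_dotProduct, dotProduct_smul, smul_eq_mul, smul_eq_mul,
      ← mul_assoc]
    have h2 : ‖y‖⁻¹ * ‖y‖⁻¹ = c⁻¹ := by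
      rw [← mul_inv]
      congr 1
      rw [← hynorm]; ring
    rw [h2]
    have h3 := hproj (A *ᵥ z)
    have h4 := hAdot z
    calc c⁻¹ * dotProduct (P *ᵥ (A *ᵥ z)) (P *ᵥ (A *ᵥ z))
        ≤ c⁻¹ * dotProduct (A *ᵥ z) (A *ᵥ z) := by
          apply mul_le_mul_of_nonneg_left h3 (by positivity)
      _ = c⁻¹ * (c * dotProduct z z) := by rw [h4]
      _ = dotProduct z z := by field_simp
  constructor
  · apply ContinuousLinearMap.opNorm_le_bound _ zero_le_one
    intro z
    rw [one_mul]
    have hsq : ‖(Matrix.toEuclideanCLM (𝕜 := ℝ) J) z‖ ^ 2 ≤ ‖z‖ ^ 2 := by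
      have happ : ((Matrix.toEuclideanCLM (𝕜 := ℝ) J) z : Fin D → ℝ) = J *ᵥ (z : Fin D → ℝ) :=
        rfl
      rw [euc_norm_sq', euc_norm_sq', happ]
      exact hJbound _
    nlinarith [norm_nonneg ((Matrix.toEuclideanCLM (𝕜 := ℝ) J) z), norm_nonneg z]
  · intro lam v hv heig
    set vr : Fin D → ℝ := fun i => (v i).re with hvr
    set vi : Fin D → ℝ := fun i => (v i).im with hvi
    have hre : ∀ i, (J *ᵥ vr) i = (lam * v i).re := by
      intro i
      have h := congrFun heig i
      simp only [Matrix.mulVec, dotProduct, Matrix.map_apply, Pi.smul_apply,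
        smul_eq_mul] at h ⊢
      have := congrArg Complex.re h
      rw [Complex.re_sum] at this
      simpa [Complex.ofReal_mul, hvr] using this
    have him : ∀ i, (J *ᵥ vi) i = (lam * v i).im := by
      intro i
      have h := congrFun heig i
      simp only [Matrix.mulVec, dotProduct, Matrix.map_apply, Pi.smul_apply,
        smul_eq_mul] at h ⊢
      have := congrArg Complex.im h
      rw [Complex.im_sum] at this
      simpa [Complex.ofReal_mul, hvi] using this
    have hS : ∀ z : Fin D → ℂ, dotProduct (fun i => (z i).re) (fun i => (z i).re) +
        dotProduct (fun i => (z i).im) (fun i => (z i).im) =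
        ∑ i, Complex.normSq (z i) := by
      intro z
      rw [dotProduct, dotProduct, ← Finset.sum_add_distrib]
      exact Finset.sum_congr rfl fun i _ => by simp [Complex.normSq_apply]
    have hkey : Complex.normSq lam * ∑ i, Complex.normSq (v i) ≤ ∑ i, Complex.normSq (v i) := by
      have h1 := hJbound vr
      have h2 := hJbound vi
      have hL : dotProduct (J *ᵥ vr) (J *ᵥ vr) + dotProduct (J *ᵥ vi) (J *ᵥ vi) =
          Complex.normSq lam * ∑ i, Complex.normSq (v i) := by
        have : dotProduct (J *ᵥ vr) (J *ᵥ vr) + dotProduct (J *ᵥ vi) (J *ᵥ vi) =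
            ∑ i, Complex.normSq (lam * v i) := by
          rw [← hS (fun i => lam * v i)]
          congr 1
          · rw [dotProduct, dotProduct]
            exact Finset.sum_congr rfl fun i _ => by rw [hre i]
          · rw [dotProduct, dotProduct]
            exact Finset.sum_congr rfl fun i _ => by rw [him i]
        rw [this, Finset.mul_sum]
        exact Finset.sum_congr rfl fun i _ => by rw [Complex.normSq_mul]
      have hR := hS v
      calc Complex.normSq lam * ∑ i, Complex.normSq (v i) = _ := hL.symm
        _ ≤ dotProduct vr vr + dotProduct vi vi := add_le_add h1 h2
        _ = ∑ i, Complex.normSq (v i) := hR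
    have hSpos : 0 < ∑ i, Complex.normSq (v i) := by
      obtain ⟨i, hi⟩ := Function.ne_iff.mp hv
      apply Finset.sum_pos' (fun j _ => Complex.normSq_nonneg _)
      exact ⟨i, Finset.mem_univ i, by simpa [Complex.normSq_pos] using hi⟩
    have hn1 : Complex.normSq lam ≤ 1 := by
      by_contra hcon
      push_neg at hcon
      nlinarith
    have := Complex.sq_norm lam
    nlinarith [norm_nonneg lam]
end
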